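/- arXiv:1311.1007 — 2 statements merged into one kernel-verified Lean document; each statement's English description precedes it below -/
import Mathlib

section
/- The Voigt–Reuss lower bound holds: for every unit vector e, e·De ≥ (1/Z) e · ( ∫_{T^d} g(y)/√(det g(y)) dy )⁻¹ e, where D is the homogenized diffusion tensor given by the variational characterization. Equivalently, the infimum over all mean-zero L² vector fields Φ of (1/Z)∫ (e + Φ(y))·g⁻¹(y)(e + Φ(y))√(det g(y)) dy equals the stated lower bound, attained at Φ(y) + e = (g(y)/√(det g(y)))( ∫ g/√(det g) )⁻¹ e. -/
open Matrix MeasureTheory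

namespace VRaux

variable {d : ℕ}

lemma dotp_nonneg (p : Fin d → ℝ) : 0 ≤ p ⬝ᵥ p :=
  Finset.sum_nonneg fun _ _ => mul_self_nonneg _

lemma Dpos (p : Fin d → ℝ) : 0 < 1 + p ⬝ᵥ p := by linarith [dotp_nonneg p]

lemma gdet (p : Fin d → ℝ) : (1 + vecMulVec p p).det = 1 + p ⬝ᵥ p := by
  rw [vecMulVec_eq Unit, det_one_add_replicateCol_mul_replicateRow]

lemma gmul (p u : Fin d → ℝ) : (1 + vecMulVec p p) *ᵥ u = u + (p ⬝ᵥ u) • p := by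
  funext i
  rw [add_mulVec, one_mulVec]
  simp only [Pi.add_apply, Pi.smul_apply, smul_eq_mul, mulVec, dotProduct, vecMulVec_apply]
  congr 1
  rw [Finset.sum_mul]
  exact Finset.sum_congr rfl fun j _ => by ring

lemma vmm (p : Fin d → ℝ) : vecMulVec p p * vecMulVec p p = (p ⬝ᵥ p) • vecMulVec p p := by
  ext i j
  simp only [mul_apply, vecMulVec_apply, Matrix.smul_apply, smul_eq_mul, dotProduct, Finset.sum_mul]
  exact Finset.sum_congr rfl fun k _ => by ring

lemma gprod (p : Fin d → ℝ) :
    (1 + vecMulVec p p) * (1 - ((1 + p ⬝ᵥ p)⁻¹) • vecMulVec p p) = 1 := by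
  have h2 : (1 + vecMulVec p p) * vecMulVec p p = (1 + p ⬝ᵥ p) • vecMulVec p p := by
    rw [add_mul, one_mul, vmm, add_smul, one_smul]
  rw [mul_sub, mul_one, Matrix.mul_smul, h2, smul_smul, inv_mul_cancel₀ (Dpos p).ne', one_smul,
    add_sub_cancel_right]

lemma ginv (p : Fin d → ℝ) :
    (1 + vecMulVec p p)⁻¹ = 1 - ((1 + p ⬝ᵥ p)⁻¹) • vecMulVec p p :=
  inv_eq_right_inv (gprod p)

lemma g_isunit (p : Fin d → ℝ) : IsUnit (1 + vecMulVec p p).det :=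
  isUnit_det_of_right_inverse (gprod p)

lemma ginv_g_mulVec (p u : Fin d → ℝ) :
    (1 + vecMulVec p p)⁻¹ *ᵥ ((1 + vecMulVec p p) *ᵥ u) = u := by
  rw [mulVec_mulVec, nonsing_inv_mul _ (g_isunit p), one_mulVec]

lemma vmv_mulVec (p u : Fin d → ℝ) : vecMulVec p p *ᵥ u = (p ⬝ᵥ u) • p := by
  funext i
  simp only [mulVec, dotProduct, vecMulVec_apply, Pi.smul_apply, smul_eq_mul, Finset.sum_mul]
  exact Finset.sum_congr rfl fun j _ => by ring

lemma ginv_mulVec (p u : Fin d → ℝ) :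
    (1 + vecMulVec p p)⁻¹ *ᵥ u = u - ((1 + p ⬝ᵥ p)⁻¹ * (p ⬝ᵥ u)) • p := by
  rw [ginv, sub_mulVec, one_mulVec, smul_mulVec, vmv_mulVec, smul_smul]

lemma gdot (p u : Fin d → ℝ) :
    u ⬝ᵥ (1 + vecMulVec p p) *ᵥ u = u ⬝ᵥ u + (p ⬝ᵥ u) ^ 2 := by
  rw [gmul, dotProduct_add, dotProduct_smul, smul_eq_mul, dotProduct_comm u p, sq]

lemma qdot (p u : Fin d → ℝ) :
    u ⬝ᵥ (1 + vecMulVec p p)⁻¹ *ᵥ u = u ⬝ᵥ u - (p ⬝ᵥ u) ^ 2 / (1 + p ⬝ᵥ p) := by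
  rw [ginv_mulVec, dotProduct_sub, dotProduct_smul, smul_eq_mul, dotProduct_comm u p]
  field_simp [(Dpos p).ne']

lemma cs (p u : Fin d → ℝ) : (p ⬝ᵥ u) ^ 2 ≤ (p ⬝ᵥ p) * (u ⬝ᵥ u) := by
  have := Finset.sum_mul_sq_le_sq_mul_sq Finset.univ p u
  simpa [dotProduct, sq, Finset.mul_sum, Finset.sum_mul, mul_pow] using this

lemma qnonneg (p u : Fin d → ℝ) : 0 ≤ u ⬝ᵥ (1 + vecMulVec p p)⁻¹ *ᵥ u := by
  rw [qdot]
  have h1 := cs p u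
  have h2 := dotp_nonneg p
  have h3 := dotp_nonneg u
  have h4 := Dpos p
  rw [sub_nonneg, div_le_iff₀ h4]
  nlinarith

lemma keypt (p u w : Fin d → ℝ) (sx t : ℝ) (hs : sx ^ 2 = 1 + p ⬝ᵥ p) (hs0 : 0 < sx) :
    ((u + t • (sx⁻¹ • ((1 + vecMulVec p p) *ᵥ w))) ⬝ᵥ
        (1 + vecMulVec p p)⁻¹ *ᵥ (u + t • (sx⁻¹ • ((1 + vecMulVec p p) *ᵥ w)))) * sx
      = (u ⬝ᵥ (1 + vecMulVec p p)⁻¹ *ᵥ u) * sx + (2 * (u ⬝ᵥ w)) * t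
        + ((w ⬝ᵥ (1 + vecMulVec p p) *ᵥ w) / sx) * (t * t) := by
  have hD : (0:ℝ) < 1 + p ⬝ᵥ p := Dpos p
  have hsne : sx ≠ 0 := hs0.ne'
  rw [qdot, qdot, gdot, gmul p w]
  simp only [smul_smul, smul_add, dotProduct_add, add_dotProduct, dotProduct_smul,
    smul_dotProduct, smul_eq_mul]
  simp only [dotProduct_comm w u, dotProduct_comm w p, dotProduct_comm u p]
  have ha : p ⬝ᵥ p = sx ^ 2 - 1 := by linarith
  rw [ha]
  field_simp
  ring

lemma contDot {X : Type*} [TopologicalSpace X] {f g : X → Fin d → ℝ}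
    (hf : Continuous f) (hg : Continuous g) : Continuous fun x => f x ⬝ᵥ g x := by
  simp only [dotProduct]
  exact continuous_finset_sum _ fun i _ =>
    ((continuous_apply i).comp hf).mul ((continuous_apply i).comp hg)

lemma fderiv_per {f : (Fin d → ℝ) → ℝ} (hf : Differentiable ℝ f)
    (c : Fin d → ℝ) (hper : ∀ x, f (x + c) = f x) (x : Fin d → ℝ) :
    fderiv ℝ f (x + c) = fderiv ℝ f x := by
  have h1 : HasFDerivAt (fun y => f (y + c)) (fderiv ℝ f (x + c)) x := by
    have h2 := ((hf (x + c)).hasFDerivAt).comp x ((hasFDerivAt_id x).add_const c)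
    exact h2
  have h2 : (fun y => f (y + c)) = f := funext hper
  rw [h2] at h1
  exact h1.fderiv.symm

lemma volume_box : (volume (Set.Icc (0 : Fin d → ℝ) 1)) = 1 := by
  rw [Real.volume_Icc_pi]
  simp

lemma scal (a b : ℝ) (hb : b ≠ 0) : b⁻¹ * (b⁻¹ * a) * b = a / b := by
  field_simp

lemma addsub {d : ℕ} (e z : Fin d → ℝ) : e + (z - e) = z := by
  abel

end VRaux


section
open VRaux

/-- The Voigt–Reuss lower bound: `e·De ≥ (1/Z) e·(∫ g/√(det g))⁻¹ e`, and the
relaxed variational problem over mean-zero vector fields `Φ` attains exactly this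
lower bound. -/
theorem stmt8 {d : ℕ} (h : (Fin d → ℝ) → ℝ) (hh : ContDiff ℝ (⊤ : ℕ∞) h)
    (hper : ∀ (x : Fin d → ℝ) (k : Fin d → ℤ), h (x + fun i => (k i : ℝ)) = h x)
    (g : (Fin d → ℝ) → Matrix (Fin d) (Fin d) ℝ)
    (hgdef : ∀ x, g x = 1 +
      Matrix.vecMulVec (fun i => fderiv ℝ h x (Pi.single i 1))
        (fun i => fderiv ℝ h x (Pi.single i 1)))
    (Z : ℝ) (hZ : Z = ∫ x in Set.Icc (0 : Fin d → ℝ) 1, Real.sqrt (g x).det)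
    (e : Fin d → ℝ) (he : ∑ i, e i ^ 2 = 1)
    (D : Matrix (Fin d) (Fin d) ℝ)
    (hD : e ⬝ᵥ D.mulVec e = sInf { r : ℝ | ∃ v : (Fin d → ℝ) → ℝ,
      ContDiff ℝ 1 v ∧
      (∀ (x : Fin d → ℝ) (k : Fin d → ℤ), v (x + fun i => (k i : ℝ)) = v x) ∧
      (∫ x in Set.Icc (0 : Fin d → ℝ) 1, v x) = 0 ∧
      r = (1 / Z) * ∫ x in Set.Icc (0 : Fin d → ℝ) 1,
        ((e + fun i => fderiv ℝ v x (Pi.single i 1)) ⬝ᵥ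
          (g x)⁻¹.mulVec (e + fun i => fderiv ℝ v x (Pi.single i 1))) *
          Real.sqrt (g x).det })
    (M : Matrix (Fin d) (Fin d) ℝ)
    (hM : ∀ i j, M i j =
      ∫ x in Set.Icc (0 : Fin d → ℝ) 1, (g x) i j / Real.sqrt (g x).det) :
    (1 / Z) * (e ⬝ᵥ M⁻¹.mulVec e) ≤ e ⬝ᵥ D.mulVec e ∧
    sInf { r : ℝ | ∃ Φ : (Fin d → ℝ) → (Fin d → ℝ), Continuous Φ ∧
        (∀ (x : Fin d → ℝ) (k : Fin d → ℤ), Φ (x + fun i => (k i : ℝ)) = Φ x) ∧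
        (∀ i, (∫ x in Set.Icc (0 : Fin d → ℝ) 1, Φ x i) = 0) ∧
        r = (1 / Z) * ∫ x in Set.Icc (0 : Fin d → ℝ) 1,
          ((e + Φ x) ⬝ᵥ (g x)⁻¹.mulVec (e + Φ x)) * Real.sqrt (g x).det }
      = (1 / Z) * (e ⬝ᵥ M⁻¹.mulVec e) := by
  classical
  have hd0 : d ≠ 0 := by
    rintro rfl
    simp at he
  obtain ⟨n, rfl⟩ : ∃ n, d = n + 1 := ⟨d - 1, by omega⟩
  -- notation
  set box : Set (Fin (n + 1) → ℝ) := Set.Icc 0 1 with hbox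
  set p : (Fin (n + 1) → ℝ) → (Fin (n + 1) → ℝ) := fun x i => fderiv ℝ h x (Pi.single i 1) with hpdef
  have hgp : ∀ x, g x = 1 + Matrix.vecMulVec (p x) (p x) := hgdef
  have hpc : Continuous p :=
    continuous_pi fun i => (hh.continuous_fderiv (by simp)).clm_apply continuous_const
  have hpper : ∀ (x : Fin (n + 1) → ℝ) (k : Fin (n + 1) → ℤ), p (x + fun i => (k i : ℝ)) = p x := by
    intro x k
    funext i
    show fderiv ℝ h (x + fun i => (k i : ℝ)) (Pi.single i 1) = fderiv ℝ h x (Pi.single i 1)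
    rw [fderiv_per (hh.differentiable (by simp)) _ (fun y => hper y k) x]
  have hdet : ∀ x, (g x).det = 1 + p x ⬝ᵥ p x := fun x => by rw [hgp]; exact gdet _
  have hdetpos : ∀ x, 0 < (g x).det := fun x => by rw [hdet]; exact Dpos _
  have hs1 : ∀ x, 1 ≤ Real.sqrt (g x).det := fun x => by
    rw [show (1:ℝ) = Real.sqrt 1 by simp]
    exact Real.sqrt_le_sqrt (by rw [hdet]; nlinarith [dotp_nonneg (p x)])
  have hspos : ∀ x, 0 < Real.sqrt (g x).det := fun x => lt_of_lt_of_le one_pos (hs1 x)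
  have hsne : ∀ x, Real.sqrt (g x).det ≠ 0 := fun x => (hspos x).ne'
  have hs2 : ∀ x, (Real.sqrt (g x).det) ^ 2 = 1 + p x ⬝ᵥ p x := fun x => by
    rw [Real.sq_sqrt (hdetpos x).le, hdet]
  have hdetc : Continuous fun x => (g x).det := by
    have : (fun x => (g x).det) = fun x => 1 + p x ⬝ᵥ p x := funext hdet
    rw [this]
    exact continuous_const.add (contDot hpc hpc)
  have hsc : Continuous fun x => Real.sqrt (g x).det := Real.continuous_sqrt.comp hdetc
  have hvol : volume box = 1 := volume_box
  have hmbox : MeasurableSet box := measurableSet_Icc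
  have intc : ∀ {f : (Fin (n + 1) → ℝ) → ℝ}, Continuous f → IntegrableOn f box :=
    fun hf => hf.integrableOn_Icc
  -- quadratic forms with g
  have hgdot : ∀ x u, u ⬝ᵥ (g x).mulVec u = u ⬝ᵥ u + (p x ⬝ᵥ u) ^ 2 := fun x u => by
    rw [hgp]; exact gdot _ _
  have hqdot : ∀ x u, u ⬝ᵥ (g x)⁻¹.mulVec u = u ⬝ᵥ u - (p x ⬝ᵥ u) ^ 2 / (1 + p x ⬝ᵥ p x) :=
    fun x u => by rw [hgp]; exact qdot _ _
  have hqnonneg : ∀ x u, 0 ≤ u ⬝ᵥ (g x)⁻¹.mulVec u := fun x u => by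
    rw [hgp]; exact qnonneg _ _
  -- continuity of quadratic-form integrands
  have hQc : ∀ (u : (Fin (n + 1) → ℝ) → (Fin (n + 1) → ℝ)), Continuous u →
      Continuous fun x => (u x ⬝ᵥ (g x)⁻¹.mulVec (u x)) * Real.sqrt (g x).det := by
    intro u hu
    have : (fun x => (u x ⬝ᵥ (g x)⁻¹.mulVec (u x)) * Real.sqrt (g x).det)
        = fun x => (u x ⬝ᵥ u x - (p x ⬝ᵥ u x) ^ 2 / (1 + p x ⬝ᵥ p x)) * Real.sqrt (g x).det := by
      funext x; rw [hqdot]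
    rw [this]
    exact ((contDot hu hu).sub (((contDot hpc hu).pow 2).div
      (continuous_const.add (contDot hpc hpc)) (fun x => (Dpos (p x)).ne'))).mul hsc
  -- M facts
  have hgijc : ∀ i j, Continuous fun x => g x i j := by
    intro i j
    have : (fun x => g x i j) = fun x => (1 : Matrix (Fin (n + 1)) (Fin (n + 1)) ℝ) i j + p x i * p x j := by
      funext x; rw [hgp]; simp [Matrix.add_apply, Matrix.vecMulVec_apply]
    rw [this]
    exact continuous_const.add (((continuous_apply i).comp hpc).mul ((continuous_apply j).comp hpc))
  have hMquad : ∀ w : Fin (n + 1) → ℝ,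
      w ⬝ᵥ M.mulVec w = ∫ x in box, (w ⬝ᵥ (g x).mulVec w) / Real.sqrt (g x).det := by
    intro w
    have hint : ∀ i j, IntegrableOn (fun x => w i * w j * (g x i j / Real.sqrt (g x).det)) box :=
      fun i j => intc (continuous_const.mul ((hgijc i j).div hsc hsne))
    calc w ⬝ᵥ M.mulVec w = ∑ i, ∑ j, w i * w j * M i j := by
          simp only [Matrix.mulVec, dotProduct, Finset.mul_sum]
          exact Finset.sum_congr rfl fun i _ => Finset.sum_congr rfl fun j _ => by ring
      _ = ∑ i, ∑ j, ∫ x in box, w i * w j * (g x i j / Real.sqrt (g x).det) := by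
          refine Finset.sum_congr rfl fun i _ => Finset.sum_congr rfl fun j _ => ?_
          rw [hM]
          exact (MeasureTheory.integral_const_mul _ _).symm
      _ = ∫ x in box, ∑ i, ∑ j, w i * w j * (g x i j / Real.sqrt (g x).det) := by
          rw [MeasureTheory.integral_finset_sum _ (fun i _ =>
            MeasureTheory.integrable_finset_sum _ (fun j _ => hint i j))]
          exact Finset.sum_congr rfl fun i _ =>
            (MeasureTheory.integral_finset_sum _ (fun j _ => hint i j)).symm
      _ = ∫ x in box, (w ⬝ᵥ (g x).mulVec w) / Real.sqrt (g x).det := by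
          congr 1
          funext x
          simp only [Matrix.mulVec, dotProduct, Finset.sum_div, Finset.mul_sum]
          refine Finset.sum_congr rfl fun i _ => Finset.sum_congr rfl fun j _ => by
            rw [div_eq_mul_inv, div_eq_mul_inv]; ring
  have hMsymm : ∀ i j, M i j = M j i := by
    intro i j
    rw [hM, hM]
    congr 1
    funext x
    rw [hgp]
    simp only [Matrix.add_apply, Matrix.vecMulVec_apply, Matrix.one_apply]
    rw [mul_comm]
    congr 1
    simp [eq_comm]
  have hGwc : ∀ w : Fin (n + 1) → ℝ, Continuous fun x => w ⬝ᵥ (g x).mulVec w := by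
    intro w
    have : (fun x => w ⬝ᵥ (g x).mulVec w) = fun x => w ⬝ᵥ w + (p x ⬝ᵥ w) ^ 2 :=
      funext fun x => hgdot x w
    rw [this]
    exact continuous_const.add ((contDot hpc continuous_const).pow 2)
  have hMpos : ∀ w : Fin (n + 1) → ℝ, w ≠ 0 → 0 < w ⬝ᵥ M.mulVec w := by
    intro w hw
    rw [hMquad]
    have hww : 0 < w ⬝ᵥ w := by
      obtain ⟨i, hi⟩ := Function.ne_iff.1 hw
      exact Finset.sum_pos' (fun j _ => mul_self_nonneg _)
        ⟨i, Finset.mem_univ i, mul_self_pos.2 hi⟩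
    have hfpos : ∀ x, 0 < (w ⬝ᵥ (g x).mulVec w) / Real.sqrt (g x).det := by
      intro x
      apply div_pos _ (hspos x)
      rw [hgdot]
      nlinarith [sq_nonneg (p x ⬝ᵥ w)]
    rw [MeasureTheory.setIntegral_pos_iff_support_of_nonneg_ae
      (MeasureTheory.ae_of_all _ fun x => (hfpos x).le)
      (intc ((hGwc w).div hsc hsne))]
    have hsupp : Function.support (fun x => (w ⬝ᵥ (g x).mulVec w) / Real.sqrt (g x).det) ∩ box
        = box := Set.inter_eq_right.2 fun x _ => (hfpos x).ne'
    rw [hsupp, hvol]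
    norm_num
  have hMunit : IsUnit M.det := by
    have hpd : M.PosDef := by
      refine Matrix.posDef_iff_dotProduct_mulVec.2 ⟨?_, ?_⟩
      · ext i j
        simp only [Matrix.conjTranspose_apply, star_trivial]
        exact hMsymm j i
      · intro x hx
        simpa using hMpos x hx
    exact hpd.det_pos.ne'.isUnit
  set w : Fin (n + 1) → ℝ := M⁻¹.mulVec e with hwdef
  have hMw : M.mulVec w = e := by
    rw [hwdef, Matrix.mulVec_mulVec, Matrix.mul_nonsing_inv _ hMunit, Matrix.one_mulVec]
  set V : ℝ := e ⬝ᵥ M⁻¹.mulVec e with hVdef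
  have hVw : V = e ⬝ᵥ w := rfl
  have hwMw : w ⬝ᵥ M.mulVec w = V := by rw [hMw, dotProduct_comm, hVw]
  have he0 : e ≠ 0 := by
    intro h0
    rw [h0] at he
    simp at he
  have hw0 : w ≠ 0 := by
    intro h0
    rw [h0] at hMw
    rw [Matrix.mulVec_zero] at hMw
    exact he0 hMw.symm
  have hVpos : 0 < V := hwMw ▸ hMpos w hw0
  have hZ1 : (1:ℝ) ≤ Z := by
    rw [hZ]
    have h1 : (1:ℝ) = ∫ _x in box, (1:ℝ) := by
      rw [MeasureTheory.setIntegral_const, MeasureTheory.measureReal_def, hvol]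
      simp
    rw [h1]
    exact MeasureTheory.setIntegral_mono_on (intc continuous_const) (intc hsc) hmbox
      fun x _ => hs1 x
  have hZpos : 0 < Z := lt_of_lt_of_le one_pos hZ1
  have hZinv : (0:ℝ) ≤ 1 / Z := by positivity
  -- the key lower bound
  have key : ∀ Φ : (Fin (n + 1) → ℝ) → (Fin (n + 1) → ℝ), Continuous Φ →
      (∀ i, (∫ x in box, Φ x i) = 0) →
      V ≤ ∫ x in box, ((e + Φ x) ⬝ᵥ (g x)⁻¹.mulVec (e + Φ x)) * Real.sqrt (g x).det := by
    intro Φ hΦc hΦ0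
    set u : (Fin (n + 1) → ℝ) → (Fin (n + 1) → ℝ) := fun x => e + Φ x with hudef
    have huc : Continuous u := continuous_const.add hΦc
    set I0 : ℝ := ∫ x in box, (u x ⬝ᵥ (g x)⁻¹.mulVec (u x)) * Real.sqrt (g x).det with hI0
    show V ≤ I0
    have hcross : (∫ x in box, u x ⬝ᵥ w) = V := by
      have h3 : (fun x => u x ⬝ᵥ w) = fun x => e ⬝ᵥ w + Φ x ⬝ᵥ w :=
        funext fun x => add_dotProduct _ _ _
      rw [h3, MeasureTheory.integral_add (intc continuous_const)
        (intc (contDot hΦc continuous_const))]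
      have h1 : (∫ _x in box, e ⬝ᵥ w) = e ⬝ᵥ w := by
        rw [MeasureTheory.setIntegral_const, MeasureTheory.measureReal_def, hvol]
        simp
      have h2 : (∫ x in box, Φ x ⬝ᵥ w) = 0 := by
        have hi : ∀ i ∈ Finset.univ, IntegrableOn (fun x => Φ x i * w i) box := fun i _ =>
          intc (((continuous_apply i).comp hΦc).mul continuous_const)
        have hsum := MeasureTheory.integral_finset_sum (μ := volume.restrict box)
          Finset.univ (f := fun i x => Φ x i * w i) hi
        simp only [dotProduct]
        rw [hsum]
        refine Finset.sum_eq_zero fun i _ => ?_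
        rw [MeasureTheory.integral_mul_const, hΦ0 i, zero_mul]
      rw [h1, h2, add_zero, hVw]
    have hquadw : (∫ x in box, (w ⬝ᵥ (g x).mulVec w) / Real.sqrt (g x).det) = V := by
      rw [← hMquad, hwMw]
    have hquadt : ∀ t : ℝ, 0 ≤ V * (t * t) + (2 * V) * t + I0 := by
      intro t
      have hexp : ∀ x ∈ box, ((u x + t • ((Real.sqrt (g x).det)⁻¹ • ((g x).mulVec w))) ⬝ᵥ
            (g x)⁻¹.mulVec (u x + t • ((Real.sqrt (g x).det)⁻¹ • ((g x).mulVec w))))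
              * Real.sqrt (g x).det
          = (u x ⬝ᵥ (g x)⁻¹.mulVec (u x)) * Real.sqrt (g x).det + (2 * (u x ⬝ᵥ w)) * t
            + ((w ⬝ᵥ (g x).mulVec w) / Real.sqrt (g x).det) * (t * t) := by
        intro x _
        rw [hgp x]
        exact keypt (p x) (u x) w _ t (by rw [← hgp x]; exact hs2 x)
          (by rw [← hgp x]; exact hspos x)
      have hnn : 0 ≤ ∫ x in box, ((u x + t • ((Real.sqrt (g x).det)⁻¹ • ((g x).mulVec w))) ⬝ᵥ
          (g x)⁻¹.mulVec (u x + t • ((Real.sqrt (g x).det)⁻¹ • ((g x).mulVec w))))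
            * Real.sqrt (g x).det :=
        MeasureTheory.setIntegral_nonneg hmbox fun x _ =>
          mul_nonneg (hqnonneg x _) (Real.sqrt_nonneg _)
      have hint1 : IntegrableOn
          (fun x => (u x ⬝ᵥ (g x)⁻¹.mulVec (u x)) * Real.sqrt (g x).det) box := intc (hQc u huc)
      have hint2 : IntegrableOn (fun x => (2 * (u x ⬝ᵥ w)) * t) box :=
        intc ((continuous_const.mul (contDot huc continuous_const)).mul continuous_const)
      have hint3 : IntegrableOn
          (fun x => ((w ⬝ᵥ (g x).mulVec w) / Real.sqrt (g x).det) * (t * t)) box :=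
        intc (((hGwc w).div hsc hsne).mul continuous_const)
      have hint12 : IntegrableOn (fun x =>
          (u x ⬝ᵥ (g x)⁻¹.mulVec (u x)) * Real.sqrt (g x).det + (2 * (u x ⬝ᵥ w)) * t) box :=
        hint1.add hint2
      rw [MeasureTheory.setIntegral_congr_fun hmbox hexp] at hnn
      rw [MeasureTheory.integral_add hint12 hint3,
        MeasureTheory.integral_add hint1 hint2, MeasureTheory.integral_mul_const,
        MeasureTheory.integral_const_mul, hcross, MeasureTheory.integral_mul_const, hquadw,
        ← hI0] at hnn
      linarith
    have hdisc := discrim_le_zero hquadt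
    rw [discrim] at hdisc
    nlinarith [hVpos]
  -- gradient fields have zero mean
  have grad_mean0 : ∀ v : (Fin (n + 1) → ℝ) → ℝ, ContDiff ℝ 1 v →
      (∀ (x : Fin (n + 1) → ℝ) (k : Fin (n + 1) → ℤ), v (x + fun i => (k i : ℝ)) = v x) →
      ∀ i, (∫ x in box, fderiv ℝ v x (Pi.single i 1)) = 0 := by
    intro v hv hvper i
    have hvc : Continuous v := hv.continuous
    have hfc : Continuous fun x => fderiv ℝ v x := hv.continuous_fderiv one_ne_zero
    have hdint : IntegrableOn (fun x => fderiv ℝ v x (Pi.single i 1)) box :=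
      intc (hfc.clm_apply continuous_const)
    set f : Fin (n + 1) → (Fin (n + 1) → ℝ) → ℝ := fun j x => if j = i then v x else 0
      with hfdef
    set f' : Fin (n + 1) → (Fin (n + 1) → ℝ) → (Fin (n + 1) → ℝ) →L[ℝ] ℝ :=
      fun j x => if j = i then fderiv ℝ v x else 0 with hf'def
    have hsum : ∀ x, (∑ j, f' j x (Pi.single j 1)) = fderiv ℝ v x (Pi.single i 1) := by
      intro x
      rw [Finset.sum_eq_single i]
      · simp [hf'def]
      · intro j _ hj
        simp [hf'def, hj]
      · intro hcon
        exact absurd (Finset.mem_univ i) hcon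
    have hfeq : (fun x => ∑ j, f' j x (Pi.single j 1))
        = fun x => fderiv ℝ v x (Pi.single i 1) := funext hsum
    have hdiv := MeasureTheory.integral_divergence_of_hasFDerivAt_off_countable'
      (0 : Fin (n + 1) → ℝ) 1 (fun _ => zero_le_one) f f' ∅ Set.countable_empty
      (fun j => by
        by_cases hj : j = i <;>
          simp [hfdef, hj, hvc.continuousOn, continuousOn_const])
      (fun x _ j => by
        by_cases hj : j = i
        · simp only [hfdef, hf'def, hj, if_pos rfl]
          exact ((hv.differentiable one_ne_zero) x).hasFDerivAt
        · simp only [hfdef, hf'def, if_neg hj]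
          exact hasFDerivAt_const 0 x)
      (by rw [hfeq]; exact hdint)
    rw [hfeq] at hdiv
    rw [show (∫ x in box, fderiv ℝ v x (Pi.single i 1)) = ∫ x in Set.Icc (0 : Fin (n+1) → ℝ) 1,
      fderiv ℝ v x (Pi.single i 1) from rfl, hdiv]
    refine Finset.sum_eq_zero fun j _ => ?_
    by_cases hj : j = i
    · subst hj
      rw [sub_eq_zero]
      congr 1
      funext y
      have h1 : j.insertNth ((1 : Fin (n+1) → ℝ) j) y
          = j.insertNth ((0 : Fin (n+1) → ℝ) j) y
            + fun l => (((Pi.single j 1 : Fin (n+1) → ℤ) l : ℝ)) := by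
        funext l
        refine Fin.succAboveCases j ?_ ?_ l
        · simp
        · intro m
          simp [Pi.single_apply, Fin.succAbove_ne j m]
      simp only [hfdef, if_pos rfl]
      rw [h1, hvper]
    · simp [hfdef, hj]
  -- the minimizer
  set Φs : (Fin (n + 1) → ℝ) → (Fin (n + 1) → ℝ) :=
    fun x => (Real.sqrt (g x).det)⁻¹ • ((g x).mulVec w) - e with hΦsdef
  have hgwc : Continuous fun x => (g x).mulVec w := by
    have h5 : (fun x => (g x).mulVec w) = fun x => w + (p x ⬝ᵥ w) • p x :=
      funext fun x => by rw [hgp]; exact gmul _ _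
    rw [h5]
    exact continuous_const.add ((contDot hpc continuous_const).smul hpc)
  have hΦsc : Continuous Φs :=
    (((hsc.inv₀ hsne)).smul hgwc).sub continuous_const
  have hgper : ∀ (x : Fin (n + 1) → ℝ) (k : Fin (n + 1) → ℤ), g (x + fun i => (k i : ℝ)) = g x :=
    fun x k => by rw [hgp, hgp, hpper x k]
  have hΦsper : ∀ (x : Fin (n + 1) → ℝ) (k : Fin (n + 1) → ℤ), Φs (x + fun i => (k i : ℝ)) = Φs x := by
    intro x k
    simp only [hΦsdef]
    rw [hgper x k]
  have hΦs0 : ∀ i, (∫ x in box, Φs x i) = 0 := by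
    intro i
    have hco : ∀ x, Φs x i = (∑ j, w j * (g x i j / Real.sqrt (g x).det)) - e i := by
      intro x
      simp only [hΦsdef, Pi.sub_apply, Pi.smul_apply, smul_eq_mul, Matrix.mulVec, dotProduct]
      congr 1
      rw [Finset.mul_sum]
      exact Finset.sum_congr rfl fun j _ => by
        rw [div_eq_mul_inv]; ring
    rw [show (fun x => Φs x i)
        = fun x => (∑ j, w j * (g x i j / Real.sqrt (g x).det)) - e i from funext hco]
    have hi : ∀ j ∈ Finset.univ, IntegrableOn
        (fun x => w j * (g x i j / Real.sqrt (g x).det)) box := fun j _ =>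
      intc (continuous_const.mul ((hgijc i j).div hsc hsne))
    have hsumint : IntegrableOn
        (fun x => ∑ j, w j * (g x i j / Real.sqrt (g x).det)) box :=
      MeasureTheory.integrable_finset_sum _ hi
    rw [MeasureTheory.integral_sub hsumint (intc continuous_const)]
    have h6 := MeasureTheory.integral_finset_sum (μ := volume.restrict box)
      Finset.univ (f := fun j x => w j * (g x i j / Real.sqrt (g x).det)) hi
    rw [h6]
    have h7 : (∑ j, ∫ x in box, w j * (g x i j / Real.sqrt (g x).det)) = M.mulVec w i := by
      rw [Matrix.mulVec, dotProduct]
      refine Finset.sum_congr rfl fun j _ => ?_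
      rw [MeasureTheory.integral_const_mul, ← hM, mul_comm]
    rw [h7, hMw]
    have h8 : (∫ _x in box, e i) = e i := by
      rw [MeasureTheory.setIntegral_const, MeasureTheory.measureReal_def, hvol]
      simp
    rw [h8, sub_self]
  have hΦsval : (∫ x in box, ((e + Φs x) ⬝ᵥ (g x)⁻¹.mulVec (e + Φs x)) * Real.sqrt (g x).det)
      = V := by
    have hptw : ∀ x ∈ box, ((e + Φs x) ⬝ᵥ (g x)⁻¹.mulVec (e + Φs x)) * Real.sqrt (g x).det
        = (w ⬝ᵥ (g x).mulVec w) / Real.sqrt (g x).det := by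
      intro x _
      have he1 : e + Φs x = (Real.sqrt (g x).det)⁻¹ • ((g x).mulVec w) := by
        simp only [hΦsdef]
        exact addsub e _
      have hinv : (g x)⁻¹.mulVec ((g x).mulVec w) = w := by
        rw [hgp]; exact ginv_g_mulVec _ _
      rw [he1, Matrix.mulVec_smul, hinv, smul_dotProduct, dotProduct_smul, smul_eq_mul,
        smul_eq_mul, dotProduct_comm]
      exact scal _ _ (hsne x)
    rw [MeasureTheory.setIntegral_congr_fun hmbox hptw, ← hMquad w]
    exact hwMw
  constructor
  · -- part 1
    rw [hD]
    refine le_csInf ⟨_, 0, contDiff_const, fun x k => rfl, by simp, rfl⟩ ?_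
    rintro r ⟨v, hv, hvper, -, rfl⟩
    have hΦc : Continuous fun x => (fun i => fderiv ℝ v x (Pi.single i 1)) :=
      continuous_pi fun i => (hv.continuous_fderiv one_ne_zero).clm_apply continuous_const
    have hΦ0 : ∀ i, (∫ x in box, fderiv ℝ v x (Pi.single i 1)) = 0 := grad_mean0 v hv hvper
    exact mul_le_mul_of_nonneg_left (key _ hΦc hΦ0) hZinv
  · -- part 2
    refine le_antisymm (csInf_le ⟨(1 / Z) * V, ?_⟩ ?_) (le_csInf ⟨_, Φs, hΦsc, hΦsper, hΦs0, rfl⟩ ?_)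
    · rintro r ⟨Φ, hc, -, h0, rfl⟩
      exact mul_le_mul_of_nonneg_left (key Φ hc h0) hZinv
    · exact ⟨Φs, hΦsc, hΦsper, hΦs0, by rw [hΦsval]⟩
    · rintro r ⟨Φ, hc, -, h0, rfl⟩
      exact mul_le_mul_of_nonneg_left (key Φ hc h0) hZinv

end
end

section
/- If the periodic surface h : T² → ℝ satisfies h(x) = h(Qx) for a π/2 rotation Q about the origin, then the homogenized diffusion tensor D (given by the variational characterization) satisfies e·De = e·(QDQᵀ)e for all unit vectors e, and hence D is isotropic. -/
open Matrix MeasureTheory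


namespace Stmt14Aux

noncomputable abbrev Qm : Matrix (Fin 2) (Fin 2) ℝ := !![0, -1; 1, 0]

lemma phi_image : (fun y : Fin 2 → ℝ => Qm.mulVec y + ![1,0]) '' Set.Icc 0 1 = Set.Icc 0 1 := by
  ext x
  constructor
  · rintro ⟨y, hy, rfl⟩
    obtain ⟨h0, h1⟩ := hy
    have h00 := h0 0; have h01 := h0 1; have h10 := h1 0; have h11 := h1 1
    simp only [Pi.zero_apply, Pi.one_apply] at h00 h01 h10 h11
    constructor <;> intro i <;> fin_cases i <;>
      simp [Qm, Matrix.mulVec, dotProduct, Fin.sum_univ_two] <;> linarith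
  · rintro ⟨h0, h1⟩
    have h00 := h0 0; have h01 := h0 1; have h10 := h1 0; have h11 := h1 1
    simp only [Pi.zero_apply, Pi.one_apply] at h00 h01 h10 h11
    refine ⟨![x 1, 1 - x 0], ⟨?_, ?_⟩, ?_⟩
    · intro i; fin_cases i <;> simp <;> linarith
    · intro i; fin_cases i <;> simp <;> linarith
    · funext i; fin_cases i <;>
        simp [Qm, Matrix.mulVec, dotProduct, Fin.sum_univ_two] <;> ring

lemma per_cov (F : (Fin 2 → ℝ) → ℝ)
    (hF : ∀ (x : Fin 2 → ℝ) (k : Fin 2 → ℤ), F (x + fun i => (k i : ℝ)) = F x) :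
    ∫ y in Set.Icc (0 : Fin 2 → ℝ) 1, F (Qm.mulVec y) = ∫ x in Set.Icc (0 : Fin 2 → ℝ) 1, F x := by
  have hA : ∀ y : Fin 2 → ℝ, (Matrix.mulVecLin Qm).toContinuousLinearMap y = Qm.mulVec y := by
    intro y; rfl
  have hdet : ((Matrix.mulVecLin Qm).toContinuousLinearMap : (Fin 2 → ℝ) →L[ℝ] (Fin 2 → ℝ)).det = 1 := by
    rw [ContinuousLinearMap.det]
    rw [LinearMap.coe_toContinuousLinearMap]
    rw [← Matrix.toLin'_apply', LinearMap.det_toLin']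
    simp [Qm, Matrix.det_fin_two_of]
  have key := integral_image_eq_integral_abs_det_fderiv_smul (volume)
    (measurableSet_Icc : MeasurableSet (Set.Icc (0 : Fin 2 → ℝ) 1))
    (f := fun y : Fin 2 → ℝ => Qm.mulVec y + ![1,0])
    (f' := fun _ => (Matrix.mulVecLin Qm).toContinuousLinearMap)
    (fun x _ => by
      have : HasFDerivAt (fun y : Fin 2 → ℝ => Qm.mulVec y + ![1,0])
          (Matrix.mulVecLin Qm).toContinuousLinearMap x := by
        simpa using (((Matrix.mulVecLin Qm).toContinuousLinearMap.hasFDerivAt (x := x)).add_const (![1,0] : Fin 2 → ℝ))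
      exact this.hasFDerivWithinAt)
    (by
      intro a _ b _ hab
      have h0 := congrFun hab 0
      have h1 := congrFun hab 1
      simp [Qm, Matrix.mulVec, dotProduct, Fin.sum_univ_two] at h0 h1
      funext i; fin_cases i <;> simp <;> linarith) F
  rw [phi_image] at key
  rw [key]
  congr 1
  funext y
  rw [hdet, abs_one, one_smul]
  have : F (Qm.mulVec y + ![1,0]) = F (Qm.mulVec y) := by
    have := hF (Qm.mulVec y) ![1,0]
    simpa [show (fun i => ((![1,0] : Fin 2 → ℤ) i : ℝ)) = ![1,0] by funext i; fin_cases i <;> simp] using this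
  exact this.symm

lemma grad_comp (u : (Fin 2 → ℝ) → ℝ) (hu : Differentiable ℝ u) (y : Fin 2 → ℝ) :
    (fun i => fderiv ℝ (fun x => u (Qm.mulVec x)) y (Pi.single i 1)) =
      Qmᵀ.mulVec (fun i => fderiv ℝ u (Qm.mulVec y) (Pi.single i 1)) := by
  have hA : HasFDerivAt (fun x : Fin 2 → ℝ => Qm.mulVec x)
      (Matrix.mulVecLin Qm).toContinuousLinearMap y :=
    (Matrix.mulVecLin Qm).toContinuousLinearMap.hasFDerivAt
  have hcomp : HasFDerivAt (fun x => u (Qm.mulVec x))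
      ((fderiv ℝ u (Qm.mulVec y)).comp (Matrix.mulVecLin Qm).toContinuousLinearMap) y :=
    (hu (Qm.mulVec y)).hasFDerivAt.comp y hA
  rw [hcomp.fderiv]
  funext i
  have e0 : Qm.mulVec (Pi.single 0 1) = Pi.single 1 1 := by
    funext j; fin_cases j <;> simp [Qm, Matrix.mulVec, dotProduct, Fin.sum_univ_two, Pi.single_apply]
  have e1 : Qm.mulVec (Pi.single 1 1) = -(Pi.single 0 1) := by
    funext j; fin_cases j <;> simp [Qm, Matrix.mulVec, dotProduct, Fin.sum_univ_two, Pi.single_apply]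
  fin_cases i <;>
    simp [ContinuousLinearMap.comp_apply, e0, e1, Qm, Matrix.mulVec, dotProduct,
      Fin.sum_univ_two, Matrix.transpose_apply] <;> ring

lemma fderiv_per (u : (Fin 2 → ℝ) → ℝ) (hu : Differentiable ℝ u)
    (hp : ∀ (x : Fin 2 → ℝ) (k : Fin 2 → ℤ), u (x + fun i => (k i : ℝ)) = u x)
    (x : Fin 2 → ℝ) (k : Fin 2 → ℤ) :
    fderiv ℝ u (x + fun i => (k i : ℝ)) = fderiv ℝ u x := by
  set c : Fin 2 → ℝ := fun i => (k i : ℝ)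
  have h1 : (fun y => u (y + c)) = u := by funext y; exact hp y k
  have h2 : HasFDerivAt (fun y : Fin 2 → ℝ => y + c)
      (ContinuousLinearMap.id ℝ (Fin 2 → ℝ)) x := by
    simpa using (hasFDerivAt_id (𝕜 := ℝ) x).add_const c
  have h3 : HasFDerivAt (fun y => u (y + c)) ((fderiv ℝ u (x + c)).comp
      (ContinuousLinearMap.id ℝ (Fin 2 → ℝ))) x := (hu (x + c)).hasFDerivAt.comp x h2
  rw [h1] at h3
  have h4 := h3.fderiv
  rw [ContinuousLinearMap.comp_id] at h4
  exact h4.symm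

lemma QmT_eq : Qmᵀ = !![0, 1; -1, 0] := by
  ext i j
  fin_cases i <;> fin_cases j <;> simp [Qm, Matrix.transpose_apply]

lemma QQT : Qm * Qmᵀ = 1 := by
  rw [QmT_eq]
  ext i j; fin_cases i <;> fin_cases j <;>
    simp [Qm, Matrix.mul_apply, Fin.sum_univ_two, Matrix.one_apply]

lemma QTQ : Qmᵀ * Qm = 1 := by
  rw [QmT_eq]
  ext i j; fin_cases i <;> fin_cases j <;>
    simp [Qm, Matrix.mul_apply, Fin.sum_univ_two, Matrix.one_apply]

lemma conj_id (a : Fin 2 → ℝ) :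
    (1 + Matrix.vecMulVec (Qm.mulVec a) (Qm.mulVec a)) = Qm * (1 + Matrix.vecMulVec a a) * Qmᵀ := by
  rw [QmT_eq]
  ext i j; fin_cases i <;> fin_cases j <;>
    simp [Qm, Matrix.mul_apply, Matrix.vecMulVec_apply, Matrix.mulVec, dotProduct,
      Matrix.vecMul, Matrix.vecHead, Matrix.vecTail,
      Fin.sum_univ_two, Matrix.one_apply] <;> ring

lemma Qinv : Qm⁻¹ = Qmᵀ := Matrix.inv_eq_right_inv QQT

lemma QTinv : (Qmᵀ)⁻¹ = Qm := Matrix.inv_eq_right_inv (by rw [← Matrix.transpose_one (n := Fin 2) (α := ℝ), ← QTQ, Matrix.transpose_mul, Matrix.transpose_transpose])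

lemma conj_inv (B : Matrix (Fin 2) (Fin 2) ℝ) : (Qm * B * Qmᵀ)⁻¹ = Qm * B⁻¹ * Qmᵀ := by
  rw [Matrix.mul_inv_rev, Matrix.mul_inv_rev, Qinv, QTinv, Matrix.mul_assoc]

lemma conj_det (B : Matrix (Fin 2) (Fin 2) ℝ) : (Qm * B * Qmᵀ).det = B.det := by
  have : Qm.det = 1 := by simp [Qm, Matrix.det_fin_two_of]
  rw [Matrix.det_mul, Matrix.det_mul, Matrix.det_transpose, this]; ring

lemma quad (B : Matrix (Fin 2) (Fin 2) ℝ) (u : Fin 2 → ℝ) :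
    u ⬝ᵥ (Qm * B * Qmᵀ).mulVec u = (Qmᵀ.mulVec u) ⬝ᵥ B.mulVec (Qmᵀ.mulVec u) := by
  rw [QmT_eq]
  simp [Qm, Matrix.mul_apply, Matrix.mulVec, dotProduct, Fin.sum_univ_two,
    Matrix.vecMul, Matrix.vecHead, Matrix.vecTail, Matrix.transpose_apply]
  ring

end Stmt14Aux

open Stmt14Aux

/-- If the periodic surface `h` satisfies `h(x) = h(Qx)` for the rotation `Q` by
`π/2`, then the homogenized diffusion tensor `D` (given by the variational
characterization) satisfies `e·De = e·(QDQᵀ)e` for all unit vectors `e`, and hence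
`D` is isotropic. -/
theorem stmt14 (h : (Fin 2 → ℝ) → ℝ) (hh : ContDiff ℝ (⊤ : ℕ∞) h)
    (hper : ∀ (x : Fin 2 → ℝ) (k : Fin 2 → ℤ), h (x + fun i => (k i : ℝ)) = h x)
    (Q : Matrix (Fin 2) (Fin 2) ℝ) (hQ : Q = !![0, -1; 1, 0])
    (hrot : ∀ x, h x = h (Q.mulVec x))
    (g : (Fin 2 → ℝ) → Matrix (Fin 2) (Fin 2) ℝ)
    (hgdef : ∀ x, g x = 1 +
      Matrix.vecMulVec (fun i => fderiv ℝ h x (Pi.single i 1))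
        (fun i => fderiv ℝ h x (Pi.single i 1)))
    (Z : ℝ) (hZ : Z = ∫ x in Set.Icc (0 : Fin 2 → ℝ) 1, Real.sqrt (g x).det)
    (D : Matrix (Fin 2) (Fin 2) ℝ) (hsym : D.IsSymm)
    (hD : ∀ e : Fin 2 → ℝ, ∑ i, e i ^ 2 = 1 →
      e ⬝ᵥ D.mulVec e = sInf { r : ℝ | ∃ v : (Fin 2 → ℝ) → ℝ,
        ContDiff ℝ 1 v ∧
        (∀ (x : Fin 2 → ℝ) (k : Fin 2 → ℤ), v (x + fun i => (k i : ℝ)) = v x) ∧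
        (∫ x in Set.Icc (0 : Fin 2 → ℝ) 1, v x) = 0 ∧
        r = (1 / Z) * ∫ x in Set.Icc (0 : Fin 2 → ℝ) 1,
          ((e + fun i => fderiv ℝ v x (Pi.single i 1)) ⬝ᵥ
            (g x)⁻¹.mulVec (e + fun i => fderiv ℝ v x (Pi.single i 1))) *
            Real.sqrt (g x).det }) :
    (∀ e : Fin 2 → ℝ, ∑ i, e i ^ 2 = 1 →
      e ⬝ᵥ D.mulVec e = e ⬝ᵥ (Q * D * Qᵀ).mulVec e) ∧
    ∃ c : ℝ, D = c • (1 : Matrix (Fin 2) (Fin 2) ℝ) := by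
  have hQ' : Q = Qm := hQ
  clear hQ
  subst hQ'
  have hhd : Differentiable ℝ h := hh.differentiable (by simp)
  set S : (Fin 2 → ℝ) → Set ℝ := fun e => { r : ℝ | ∃ v : (Fin 2 → ℝ) → ℝ,
        ContDiff ℝ 1 v ∧
        (∀ (x : Fin 2 → ℝ) (k : Fin 2 → ℤ), v (x + fun i => (k i : ℝ)) = v x) ∧
        (∫ x in Set.Icc (0 : Fin 2 → ℝ) 1, v x) = 0 ∧
        r = (1 / Z) * ∫ x in Set.Icc (0 : Fin 2 → ℝ) 1,
          ((e + fun i => fderiv ℝ v x (Pi.single i 1)) ⬝ᵥ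
            (g x)⁻¹.mulVec (e + fun i => fderiv ℝ v x (Pi.single i 1))) *
            Real.sqrt (g x).det } with hSdef
  have hD' : ∀ e : Fin 2 → ℝ, ∑ i, e i ^ 2 = 1 → e ⬝ᵥ D.mulVec e = sInf (S e) := hD
  -- periodicity of g
  have hgper : ∀ (x : Fin 2 → ℝ) (k : Fin 2 → ℤ), g (x + fun i => (k i : ℝ)) = g x := by
    intro x k
    rw [hgdef, hgdef, fderiv_per h hhd hper x k]
  -- rotation law for g
  have hgrot : ∀ x : Fin 2 → ℝ, g (Qm.mulVec x) = Qm * g x * Qmᵀ := by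
    intro x
    have hcomp : (fun i => fderiv ℝ h (Qm.mulVec x) (Pi.single i 1)) =
        Qm.mulVec (fun i => fderiv ℝ h x (Pi.single i 1)) := by
      have h1 : (fun z => h (Qm.mulVec z)) = h := by funext z; exact (hrot z).symm
      have h2 := grad_comp h hhd x
      rw [h1] at h2
      rw [h2, Matrix.mulVec_mulVec, QQT, Matrix.one_mulVec]
    rw [hgdef (Qm.mulVec x), hcomp, conj_id, ← hgdef x]
  -- key inclusion
  have key : ∀ e : Fin 2 → ℝ, S e ⊆ S (Qmᵀ.mulVec e) := by
    intro e r hr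
    obtain ⟨v, hv1, hv2, hv3, hv4⟩ := hr
    have hvd : Differentiable ℝ v := hv1.differentiable one_ne_zero
    refine ⟨fun x => v (Qm.mulVec x), ?_, ?_, ?_, ?_⟩
    · exact hv1.comp ((Matrix.mulVecLin Qm).toContinuousLinearMap.contDiff)
    · intro x k
      have hk : Qm.mulVec (x + fun i => (k i : ℝ)) =
          Qm.mulVec x + fun i => (((![-(k 1), k 0] : Fin 2 → ℤ)) i : ℝ) := by
        rw [Matrix.mulVec_add]
        congr 1
        funext i
        fin_cases i <;>
          simp [Qm, Matrix.mulVec, dotProduct, Fin.sum_univ_two]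
      show v (Qm.mulVec (x + fun i => (k i : ℝ))) = v (Qm.mulVec x)
      rw [hk, hv2]
    · show (∫ x in Set.Icc (0 : Fin 2 → ℝ) 1, v (Qm.mulVec x)) = 0
      rw [per_cov v hv2, hv3]
    · rw [hv4]
      congr 1
      symm
      have hpoint : ∀ x : Fin 2 → ℝ,
          ((Qmᵀ.mulVec e + fun i => fderiv ℝ (fun z => v (Qm.mulVec z)) x (Pi.single i 1)) ⬝ᵥ
            (g x)⁻¹.mulVec (Qmᵀ.mulVec e + fun i => fderiv ℝ (fun z => v (Qm.mulVec z)) x (Pi.single i 1))) *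
            Real.sqrt (g x).det =
          ((e + fun i => fderiv ℝ v (Qm.mulVec x) (Pi.single i 1)) ⬝ᵥ
            (g (Qm.mulVec x))⁻¹.mulVec (e + fun i => fderiv ℝ v (Qm.mulVec x) (Pi.single i 1))) *
            Real.sqrt (g (Qm.mulVec x)).det := by
        intro x
        have hb : (Qmᵀ.mulVec e + fun i => fderiv ℝ (fun z => v (Qm.mulVec z)) x (Pi.single i 1)) =
            Qmᵀ.mulVec (e + fun i => fderiv ℝ v (Qm.mulVec x) (Pi.single i 1)) := by
          rw [grad_comp v hvd x, ← Matrix.mulVec_add]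
        rw [hb, hgrot x, Stmt14Aux.conj_inv, Stmt14Aux.conj_det, Stmt14Aux.quad]
      calc (∫ x in Set.Icc (0 : Fin 2 → ℝ) 1,
            ((Qmᵀ.mulVec e + fun i => fderiv ℝ (fun z => v (Qm.mulVec z)) x (Pi.single i 1)) ⬝ᵥ
              (g x)⁻¹.mulVec (Qmᵀ.mulVec e + fun i => fderiv ℝ (fun z => v (Qm.mulVec z)) x (Pi.single i 1))) *
              Real.sqrt (g x).det)
          = ∫ x in Set.Icc (0 : Fin 2 → ℝ) 1,
            ((e + fun i => fderiv ℝ v (Qm.mulVec x) (Pi.single i 1)) ⬝ᵥ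
              (g (Qm.mulVec x))⁻¹.mulVec (e + fun i => fderiv ℝ v (Qm.mulVec x) (Pi.single i 1))) *
              Real.sqrt (g (Qm.mulVec x)).det := by
            exact integral_congr_ae (.of_forall fun x => hpoint x)
        _ = ∫ x in Set.Icc (0 : Fin 2 → ℝ) 1,
            ((e + fun i => fderiv ℝ v x (Pi.single i 1)) ⬝ᵥ
              (g x)⁻¹.mulVec (e + fun i => fderiv ℝ v x (Pi.single i 1))) *
              Real.sqrt (g x).det := by
            exact per_cov (fun x =>
              ((e + fun i => fderiv ℝ v x (Pi.single i 1)) ⬝ᵥ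
                (g x)⁻¹.mulVec (e + fun i => fderiv ℝ v x (Pi.single i 1))) *
                Real.sqrt (g x).det)
              (fun x k => by simp only [fderiv_per v hvd hv2, hgper])
  -- S e = S (Qᵀ e)
  have hT4 : ∀ e : Fin 2 → ℝ, Qmᵀ.mulVec (Qmᵀ.mulVec (Qmᵀ.mulVec (Qmᵀ.mulVec e))) = e := by
    intro e
    funext i
    fin_cases i <;>
      simp [QmT_eq, Matrix.mulVec, dotProduct, Fin.sum_univ_two] <;> ring
  have hSeq : ∀ e : Fin 2 → ℝ, S e = S (Qmᵀ.mulVec e) := by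
    intro e
    refine le_antisymm (key e) ?_
    have h3 := (key (Qmᵀ.mulVec e)).trans ((key _).trans (key _))
    rwa [hT4] at h3
  -- part 1
  have part1 : ∀ e : Fin 2 → ℝ, (∑ i, e i ^ 2 = 1) →
      e ⬝ᵥ D.mulVec e = e ⬝ᵥ (Qm * D * Qmᵀ).mulVec e := by
    intro e he
    have he' : ∑ i, (Qmᵀ.mulVec e) i ^ 2 = 1 := by
      rw [Fin.sum_univ_two] at he ⊢
      rw [QmT_eq]
      simp [Matrix.mulVec, dotProduct, Fin.sum_univ_two]
      linarith
    rw [Stmt14Aux.quad, hD' e he, hD' _ he', hSeq e]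
  refine ⟨part1, ?_⟩
  -- part 2
  have hs01 : D 1 0 = D 0 1 := hsym.apply 0 1
  have h1 := part1 ![1, 0] (by norm_num [Fin.sum_univ_two])
  have h2 := part1 ![3/5, 4/5] (by norm_num [Fin.sum_univ_two])
  rw [Stmt14Aux.quad, QmT_eq] at h1 h2
  simp [Matrix.mulVec, dotProduct, Fin.sum_univ_two] at h1 h2
  refine ⟨D 0 0, ?_⟩
  ext i j
  fin_cases i <;> fin_cases j <;>
    simp [Matrix.smul_apply, Matrix.one_apply] <;> linarith
end
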